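/- (Lemma 2) Let ρ > 0, l ∈ ℕ, N ∈ ℕ, let R ∈ ℝ^{l×l} be symmetric positive definite, and let z : [0,1] × [0,∞) → ℝ^l be continuously differentiable, satisfy the transport equation z_t(x,t) = −ρ z_x(x,t) for all (x,t) ∈ [0,1] × [0,∞), and have zero initial condition z(x,0) = 0 for all x ∈ [0,1]. Define Ω_k(t) = ∫₀¹ z(x,t) 𝓛_k(x) dx. Then for every T ≥ 0: ∫₀^T ( z(0,t)ᵀ R z(0,t) − Σ_{k=0}^{N} (2k+1) Ω_k(t)ᵀ R Ω_k(t) ) dt ≥ 0. -/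

import Mathlib

open Finset Matrix

/-- The shifted Legendre polynomial on `[0,1]`:
`𝓛_k(x) = (−1)^k ∑_{l=0}^{k} (−1)^l (k choose l) ((k+l) choose l) x^l`. -/
noncomputable def shiftedLegendre (k : ℕ) (x : ℝ) : ℝ :=
  (-1 : ℝ) ^ k *
    ∑ l ∈ range (k + 1),
      (-1 : ℝ) ^ l * (k.choose l) * ((k + l).choose l) * x ^ l

/-!
The Legendre part is Bessel's inequality: for the weighted form `β(u, v) = uᵀ R v`, the partial
sum `P w = ∑_{k ≤ N} (2k+1) 𝓛_k Ω_k` of the Legendre series of `w = z(·, t)` satisfies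
`∫ β(w, P w) = ∫ β(P w, w) = ∫ β(P w, P w) = ∑_{k ≤ N} (2k+1) β(Ω_k, Ω_k)` by orthogonality of the
`𝓛_k` (proved through Rodrigues' formula), so `0 ≤ ∫ β(w - P w, w - P w)` gives
`∑ (2k+1) β(Ω_k, Ω_k) ≤ ∫₀¹ β(z, z) dx`.

The transport part is an energy estimate: `Q = β(z, z)` solves `Q_t = -ρ Q_x` as well, and
`U(t) = ∫₀¹ (1 - x) Q(x, t) dx` satisfies `U' = ρ (Q(0, t) - ∫₀¹ Q(x, t) dx)` after one integration
by parts. Since `U(0) = 0 ≤ U(T)`, integrating over `[0, T]` gives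
`∫₀^T ∫₀¹ Q dx dt ≤ ∫₀^T Q(0, t) dt`, and the two inequalities combine.
-/

open scoped Polynomial Nat
open intervalIntegral

theorem integral_pow_mul_one_sub_pow (a b : ℕ) :
    ∫ x in (0 : ℝ)..1, x ^ a * (1 - x) ^ b = (a ! * b ! : ℝ) / (a + b + 1)! := by
  induction b generalizing a with
  | zero => simp [integral_pow, Nat.factorial_succ]; field_simp
  | succ b ih =>
    have hsplit : ∀ x : ℝ,
        x ^ a * (1 - x) ^ (b + 1) = x ^ a * (1 - x) ^ b - x ^ (a + 1) * (1 - x) ^ b :=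
      fun x => by ring
    simp_rw [hsplit]
    rw [integral_sub (by apply Continuous.intervalIntegrable; fun_prop)
      (by apply Continuous.intervalIntegrable; fun_prop), ih, ih,
      show a + 1 + b + 1 = (a + b + 1) + 1 by ring, show a + (b + 1) + 1 = (a + b + 1) + 1 by ring]
    push_cast [Nat.factorial_succ]
    field_simp
    ring

namespace Polynomial

theorem integral_eval_mul_iterate_derivative {a b : ℝ} {m : ℕ} {F : ℝ[X]}
    (hF : ∀ j < m, (derivative^[j] F).eval a = 0 ∧ (derivative^[j] F).eval b = 0) (p : ℝ[X]) :
    ∫ x in a..b, p.eval x * (derivative^[m] F).eval x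
      = (-1) ^ m * ∫ x in a..b, (derivative^[m] p).eval x * F.eval x := by
  induction m generalizing F with
  | zero => simp
  | succ m ih =>
    have hDF : ∀ j < m, (derivative^[j] (derivative F)).eval a = 0 ∧
        (derivative^[j] (derivative F)).eval b = 0 := fun j hj => by
      simpa only [← Function.iterate_succ_apply] using hF (j + 1) (by omega)
    have hparts := integral_mul_deriv_eq_deriv_mul (a := a) (b := b)
      (fun x _ => (derivative^[m] p).hasDerivAt x) (fun x _ => F.hasDerivAt x)
      ((derivative^[m] p).derivative.continuous.intervalIntegrable _ _)
      ((derivative F).continuous.intervalIntegrable _ _)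
    obtain ⟨hFa, hFb⟩ := hF 0 (Nat.succ_pos m)
    simp only [Function.iterate_zero_apply] at hFa hFb
    rw [Function.iterate_succ_apply, ih hDF, hparts, hFa, hFb,
      ← Function.iterate_succ_apply' derivative]
    simp only [mul_zero, sub_zero, zero_sub, pow_succ]
    ring

theorem iterate_derivative_eq_C_of_natDegree_le {p : ℝ[X]} {k : ℕ} (hp : p.natDegree ≤ k) :
    derivative^[k] p = C (k ! * p.coeff k) := by
  rw [eq_C_of_natDegree_le_zero ((natDegree_iterate_derivative p k).trans (by omega)),
    coeff_iterate_derivative, zero_add, Nat.descFactorial_self, nsmul_eq_mul]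

theorem iterate_derivative_X_pow_mul_one_sub_X_pow_eval_eq_zero {k j : ℕ} (hj : j < k) :
    (derivative^[j] (X ^ k * (1 - X) ^ k : ℝ[X])).eval 0 = 0 ∧
      (derivative^[j] (X ^ k * (1 - X) ^ k : ℝ[X])).eval 1 = 0 := by
  have hk : k - j ≠ 0 := by omega
  constructor
  · refine eval_eq_zero_of_dvd_of_eval_eq_zero
      (pow_sub_dvd_iterate_derivative_of_pow_dvd j (dvd_mul_right (X ^ k) _)) ?_
    simp [hk]
  · refine eval_eq_zero_of_dvd_of_eval_eq_zero
      (pow_sub_dvd_iterate_derivative_of_pow_dvd j (dvd_mul_left ((1 - X) ^ k) _)) ?_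
    simp [hk]

theorem integral_eval_mul_iterate_derivative_X_pow_mul_one_sub_X_pow {p : ℝ[X]} {k : ℕ}
    (hp : p.natDegree ≤ k) :
    ∫ x in (0 : ℝ)..1, p.eval x * (derivative^[k] (X ^ k * (1 - X) ^ k)).eval x
      = (-1) ^ k * (k ! * p.coeff k) * ((k ! * k ! : ℝ) / (2 * k + 1)!) := by
  rw [integral_eval_mul_iterate_derivative
      (fun j hj => iterate_derivative_X_pow_mul_one_sub_X_pow_eval_eq_zero hj),
    iterate_derivative_eq_C_of_natDegree_le hp]
  simp only [eval_C, eval_mul, eval_pow, eval_sub, eval_one, eval_X, integral_const_mul,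
    integral_pow_mul_one_sub_pow, two_mul]
  ring

theorem factorial_mul_shiftedLegendre_eval (k : ℕ) (x : ℝ) :
    k ! * ((Polynomial.shiftedLegendre k).map (Int.castRingHom ℝ)).eval x
      = (derivative^[k] (X ^ k * (1 - X) ^ k : ℝ[X])).eval x := by
  have h := congrArg (fun p => ((p.map (Int.castRingHom ℝ)).eval x))
    (factorial_mul_shiftedLegendre_eq k)
  simpa only [Polynomial.map_mul, Polynomial.map_natCast, ← iterate_derivative_map,
    Polynomial.map_pow, Polynomial.map_sub, Polynomial.map_one, Polynomial.map_X, eval_mul,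
    eval_natCast] using h

end Polynomial

theorem shiftedLegendre_eq_eval (k : ℕ) (x : ℝ) :
    shiftedLegendre k x
      = (-1) ^ k * ((Polynomial.shiftedLegendre k).map (Int.castRingHom ℝ)).eval x := by
  rw [shiftedLegendre, Polynomial.eval_map, Polynomial.shiftedLegendre, Polynomial.eval₂_finsetSum]
  refine congrArg _ (sum_congr rfl fun l _ => ?_)
  simp [Polynomial.eval₂_pow, Nat.choose_symm_add (a := k) (b := l)]

theorem integral_shiftedLegendre_mul_of_le {j k : ℕ} (hjk : j ≤ k) :
    ∫ x in (0 : ℝ)..1, shiftedLegendre j x * shiftedLegendre k x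
      = if j = k then 1 / (2 * (k : ℝ) + 1) else 0 := by
  have hdeg : ((Polynomial.shiftedLegendre j).map (Int.castRingHom ℝ)).natDegree ≤ k :=
    (Polynomial.natDegree_map_le).trans (by simpa using hjk)
  have hrodrigues : ∫ x in (0 : ℝ)..1, shiftedLegendre j x * shiftedLegendre k x
      = (-1) ^ (j + k) / k ! * ∫ x in (0 : ℝ)..1,
          ((Polynomial.shiftedLegendre j).map (Int.castRingHom ℝ)).eval x *
            (Polynomial.derivative^[k] (Polynomial.X ^ k * (1 - Polynomial.X) ^ k)).eval x := by
    rw [← integral_const_mul]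
    refine integral_congr fun x _ => ?_
    simp only [shiftedLegendre_eq_eval, ← Polynomial.factorial_mul_shiftedLegendre_eval]
    field_simp
    ring
  rw [hrodrigues, Polynomial.integral_eval_mul_iterate_derivative_X_pow_mul_one_sub_X_pow hdeg,
    Polynomial.coeff_map, Polynomial.coeff_shiftedLegendre]
  split_ifs with h
  · subst h
    have hfact : ((2 * j).choose j * j ! * j ! : ℝ) = (2 * j)! := by
      have h := Nat.choose_mul_factorial_mul_factorial (by omega : j ≤ 2 * j)
      rw [show 2 * j - j = j by omega] at h
      exact_mod_cast h
    have hsign : ((-1 : ℝ) ^ j) ^ 2 = 1 := by rw [← pow_mul, pow_mul']; simp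
    simp only [map_mul, map_pow, map_neg, map_one, map_natCast, Nat.choose_self, ← two_mul,
      pow_mul, neg_one_sq, one_pow, Nat.factorial_succ]
    push_cast
    rw [← hfact]
    have hc : ((2 * j).choose j : ℝ) ≠ 0 := by exact_mod_cast (Nat.choose_pos (by omega)).ne'
    field_simp
    rw [hsign]
  · simp [Nat.choose_eq_zero_of_lt (lt_of_le_of_ne hjk h)]

theorem integral_shiftedLegendre_mul_shiftedLegendre (j k : ℕ) :
    ∫ x in (0 : ℝ)..1, shiftedLegendre j x * shiftedLegendre k x
      = if j = k then 1 / (2 * (k : ℝ) + 1) else 0 := by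
  rcases le_total j k with h | h
  · exact integral_shiftedLegendre_mul_of_le h
  · rw [integral_congr fun x _ => mul_comm _ _, integral_shiftedLegendre_mul_of_le h]
    rcases eq_or_ne j k with rfl | hne
    · rfl
    · simp [hne, hne.symm]

@[fun_prop]
theorem continuous_shiftedLegendre (k : ℕ) : Continuous (shiftedLegendre k) := by
  unfold shiftedLegendre
  fun_prop

section LegendreSeries

variable {E F : Type*} [NormedAddCommGroup E] [NormedSpace ℝ E]
  [NormedAddCommGroup F] [NormedSpace ℝ F]

noncomputable def legendreCoeff (u : ℝ → E) (k : ℕ) : E :=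
  ∫ x in (0 : ℝ)..1, shiftedLegendre k x • u x

noncomputable def legendrePartialSum (N : ℕ) (u : ℝ → E) (x : ℝ) : E :=
  ∑ k ∈ range (N + 1), ((2 * k + 1) * shiftedLegendre k x) • legendreCoeff u k

@[fun_prop]
theorem continuous_legendrePartialSum (N : ℕ) (u : ℝ → E) :
    Continuous (legendrePartialSum N u) := by
  unfold legendrePartialSum
  fun_prop

theorem legendreCoeff_legendrePartialSum [CompleteSpace E] {N j : ℕ} (hj : j ≤ N) (u : ℝ → E) :
    legendreCoeff (legendrePartialSum N u) j = legendreCoeff u j := by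
  simp only [legendreCoeff, legendrePartialSum, Finset.smul_sum, smul_smul]
  rw [integral_finsetSum fun k _ => by apply Continuous.intervalIntegrable; fun_prop]
  simp_rw [intervalIntegral.integral_smul_const, mul_left_comm (shiftedLegendre j _),
    integral_const_mul, integral_shiftedLegendre_mul_shiftedLegendre, mul_ite, mul_zero, ite_smul,
    zero_smul]
  rw [Finset.sum_ite_eq, if_pos (Finset.mem_range_succ_iff.mpr hj),
    mul_one_div_cancel (by positivity), one_smul]

theorem integral_apply_legendrePartialSum_left [CompleteSpace E] [CompleteSpace F]
    (β : E →L[ℝ] E →L[ℝ] F) (N : ℕ) (w : ℝ → E) {u : ℝ → E} (hu : Continuous u) :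
    ∫ x in (0 : ℝ)..1, β (legendrePartialSum N w x) (u x)
      = ∑ k ∈ range (N + 1), (2 * k + 1 : ℝ) • β (legendreCoeff w k) (legendreCoeff u k) := by
  have hexpand : ∀ x, β (legendrePartialSum N w x) (u x)
      = ∑ k ∈ range (N + 1),
          (2 * k + 1 : ℝ) • β (legendreCoeff w k) (shiftedLegendre k x • u x) := by
    intro x
    simp only [legendrePartialSum, map_sum, map_smul, FunLike.coe_sum,
      Finset.sum_apply, FunLike.coe_smul, Pi.smul_apply, mul_smul]
  simp_rw [hexpand]
  rw [integral_finsetSum fun k _ => by apply Continuous.intervalIntegrable; fun_prop]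
  refine sum_congr rfl fun k _ => ?_
  rw [intervalIntegral.integral_smul, (β _).intervalIntegral_comp_comm
    (by apply Continuous.intervalIntegrable; fun_prop)]
  rfl

theorem integral_apply_legendrePartialSum_right [CompleteSpace E] [CompleteSpace F]
    (β : E →L[ℝ] E →L[ℝ] F) (N : ℕ) (w : ℝ → E) {u : ℝ → E} (hu : Continuous u) :
    ∫ x in (0 : ℝ)..1, β (u x) (legendrePartialSum N w x)
      = ∑ k ∈ range (N + 1), (2 * k + 1 : ℝ) • β (legendreCoeff u k) (legendreCoeff w k) :=
  integral_apply_legendrePartialSum_left β.flip N w hu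

theorem sum_legendreCoeff_le_integral [CompleteSpace E] (β : E →L[ℝ] E →L[ℝ] ℝ)
    (hβ : ∀ v, 0 ≤ β v v) (N : ℕ) {w : ℝ → E} (hw : Continuous w) :
    ∑ k ∈ range (N + 1), (2 * k + 1 : ℝ) * β (legendreCoeff w k) (legendreCoeff w k)
      ≤ ∫ x in (0 : ℝ)..1, β (w x) (w x) := by
  have hP : Continuous (legendrePartialSum N w) := continuous_legendrePartialSum N w
  have hPw := integral_apply_legendrePartialSum_left β N w hw
  have hwP := integral_apply_legendrePartialSum_right β N w hw
  have hPP := integral_apply_legendrePartialSum_left β N w hP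
  rw [Finset.sum_congr rfl fun k hk =>
    by rw [legendreCoeff_legendrePartialSum (Finset.mem_range_succ_iff.mp hk)]] at hPP
  simp only [smul_eq_mul] at hPw hwP hPP
  have hint : ∀ {f g : ℝ → E}, Continuous f → Continuous g →
      IntervalIntegrable (fun x => β (f x) (g x)) MeasureTheory.volume 0 1 :=
    fun hf hg => by apply Continuous.intervalIntegrable; fun_prop
  have hnonneg : 0 ≤ ∫ x in (0 : ℝ)..1,
      β (w x - legendrePartialSum N w x) (w x - legendrePartialSum N w x) :=
    integral_nonneg zero_le_one fun x _ => hβ _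
  simp only [map_sub, _root_.sub_apply] at hnonneg
  rw [integral_sub ((hint hw hw).sub (hint hP hw)) ((hint hw hP).sub (hint hP hP)),
    integral_sub (hint hw hw) (hint hP hw), integral_sub (hint hw hP) (hint hP hP)] at hnonneg
  linarith

theorem legendreCoeff_apply {ι : Type*} [Fintype ι] {w : ℝ → ι → ℝ} (hw : Continuous w)
    (k : ℕ) (i : ι) :
    legendreCoeff w k i = ∫ x in (0 : ℝ)..1, w x i * shiftedLegendre k x := by
  have h := (ContinuousLinearMap.proj i : (ι → ℝ) →L[ℝ] ℝ).intervalIntegral_comp_comm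
    (f := fun x => shiftedLegendre k x • w x) (μ := MeasureTheory.volume) (a := 0) (b := 1)
    (by apply Continuous.intervalIntegrable; fun_prop)
  simpa [legendreCoeff, mul_comm] using h.symm

end LegendreSeries

section Transport

variable {E F : Type*} [NormedAddCommGroup E] [NormedSpace ℝ E]
  [NormedAddCommGroup F] [NormedSpace ℝ F]

theorem hasDerivAt_integral_of_continuous_partial [CompleteSpace E] {a b : ℝ}
    {F F' : ℝ × ℝ → E} (hF : Continuous F) (hF' : Continuous F')
    (hderiv : ∀ x t, HasDerivAt (fun s => F (x, s)) (F' (x, t)) t) (t₀ : ℝ) :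
    HasDerivAt (fun t => ∫ x in a..b, F (x, t)) (∫ x in a..b, F' (x, t₀)) t₀ := by
  obtain ⟨C, hC⟩ := (isCompact_uIcc.prod (isCompact_closedBall t₀ 1)).exists_bound_of_continuousOn
    hF'.continuousOn
  refine (intervalIntegral.hasDerivAt_integral_of_dominated_loc_of_deriv_le
    (bound := fun _ => C) (Metric.ball_mem_nhds t₀ one_pos)
    (.of_forall fun t => by fun_prop) (by apply Continuous.intervalIntegrable; fun_prop)
    (by fun_prop) (.of_forall fun x hx t ht => hC (x, t) ⟨Set.uIoc_subset_uIcc hx,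
      Metric.ball_subset_closedBall ht⟩) intervalIntegrable_const
    (.of_forall fun x _ t _ => hderiv x t)).2

theorem hasDerivAt_partial_snd {f : ℝ × ℝ → E} {x t : ℝ} (hf : DifferentiableAt ℝ f (x, t)) :
    HasDerivAt (fun s => f (x, s)) (fderiv ℝ f (x, t) (0, 1)) t :=
  hf.hasFDerivAt.comp_hasDerivAt t ((hasDerivAt_const t x).prodMk (hasDerivAt_id t))

theorem hasDerivAt_partial_fst {f : ℝ × ℝ → E} {x t : ℝ} (hf : DifferentiableAt ℝ f (x, t)) :
    HasDerivAt (fun y => f (y, t)) (fderiv ℝ f (x, t) (1, 0)) x :=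
  hf.hasFDerivAt.comp_hasDerivAt x ((hasDerivAt_id x).prodMk (hasDerivAt_const x t))

theorem deriv_bilin_self_of_transport {ρ : ℝ} (β : E →L[ℝ] E →L[ℝ] F)
    {z : ℝ × ℝ → E} (hz : Differentiable ℝ z) {x t : ℝ}
    (h : deriv (fun s => z (x, s)) t = -ρ • deriv (fun y => z (y, t)) x) :
    deriv (fun s => β (z (x, s)) (z (x, s))) t
      = -ρ • deriv (fun y => β (z (y, t)) (z (y, t))) x := by
  have hzt : HasDerivAt (fun s => z (x, s)) (deriv (fun s => z (x, s)) t) t :=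
    (hasDerivAt_partial_snd (hz _)).differentiableAt.hasDerivAt
  have hzx : HasDerivAt (fun y => z (y, t)) (deriv (fun y => z (y, t)) x) x :=
    (hasDerivAt_partial_fst (hz _)).differentiableAt.hasDerivAt
  rw [(β.hasDerivAt_of_bilinear (fun _ => hzt) (fun _ => hzt)).deriv,
    (β.hasDerivAt_of_bilinear (fun _ => hzx) (fun _ => hzx)).deriv, h]
  simp only [map_smul, _root_.smul_apply, smul_add]

theorem integral_integral_le_integral_of_transport {ρ : ℝ} (hρ : 0 < ρ) {Q : ℝ × ℝ → ℝ}
    (hQ : ContDiff ℝ 1 Q)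
    (hpde : ∀ x ∈ Set.Icc (0 : ℝ) 1, ∀ t ≥ (0 : ℝ),
      deriv (fun s => Q (x, s)) t = -ρ * deriv (fun y => Q (y, t)) x)
    (hinit : ∀ x ∈ Set.Icc (0 : ℝ) 1, Q (x, 0) = 0) {T : ℝ} (hT : 0 ≤ T)
    (hQT : ∀ x ∈ Set.Icc (0 : ℝ) 1, 0 ≤ Q (x, T)) :
    ∫ t in (0 : ℝ)..T, ∫ x in (0 : ℝ)..1, Q (x, t) ≤ ∫ t in (0 : ℝ)..T, Q (0, t) := by
  have hQc : Continuous Q := hQ.continuous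
  set Qt : ℝ × ℝ → ℝ := fun p => fderiv ℝ Q p (0, 1)
  set Qx : ℝ × ℝ → ℝ := fun p => fderiv ℝ Q p (1, 0)
  have hQtc : Continuous Qt := (hQ.continuous_fderiv one_ne_zero).clm_apply continuous_const
  have hQxc : Continuous Qx := (hQ.continuous_fderiv one_ne_zero).clm_apply continuous_const
  have hdiff : ∀ p, DifferentiableAt ℝ Q p := fun p => hQ.differentiable one_ne_zero p
  have hQt : ∀ x t, HasDerivAt (fun s => Q (x, s)) (Qt (x, t)) t :=
    fun x t => hasDerivAt_partial_snd (hdiff _)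
  have hQx : ∀ x t, HasDerivAt (fun y => Q (y, t)) (Qx (x, t)) x :=
    fun x t => hasDerivAt_partial_fst (hdiff _)
  have hQtx : ∀ x ∈ Set.Icc (0 : ℝ) 1, ∀ t ≥ (0 : ℝ), Qt (x, t) = -ρ * Qx (x, t) := by
    intro x hx t ht
    rw [← (hQt x t).deriv, ← (hQx x t).deriv]
    exact hpde x hx t ht
  set U : ℝ → ℝ := fun t => ∫ x in (0 : ℝ)..1, (1 - x) * Q (x, t)
  have hU : ∀ t ∈ Set.uIcc 0 T,
      HasDerivAt U (ρ * (Q (0, t) - ∫ x in (0 : ℝ)..1, Q (x, t))) t := by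
    intro t ht
    have h := hasDerivAt_integral_of_continuous_partial (a := 0) (b := 1)
      (F := fun p => (1 - p.1) * Q p) (F' := fun p => (1 - p.1) * Qt p) (by fun_prop)
      (by fun_prop) (fun x t => (hQt x t).const_mul (1 - x)) t
    refine h.congr_deriv ?_
    rw [Set.uIcc_of_le hT] at ht
    have hparts := integral_mul_deriv_eq_deriv_mul (a := 0) (b := 1)
      (fun x _ => (hasDerivAt_id x).const_sub 1) (fun x _ => hQx x t)
      intervalIntegrable_const (by apply Continuous.intervalIntegrable; fun_prop)
    rw [integral_congr fun x hx => by
      rw [hQtx x (by rwa [Set.uIcc_of_le zero_le_one] at hx) t ht.1]]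
    simp only [id, mul_left_comm (1 - _) (-ρ), integral_const_mul] at hparts ⊢
    rw [hparts]
    ring
  have hftc := integral_eq_sub_of_hasDerivAt hU (by apply Continuous.intervalIntegrable; fun_prop)
  have hU0 : U 0 = 0 := by
    simp only [U]
    rw [integral_congr fun x hx => by
      rw [hinit x (by rwa [Set.uIcc_of_le zero_le_one] at hx), mul_zero]]
    simp
  have hUT : 0 ≤ U T :=
    integral_nonneg zero_le_one fun x hx => mul_nonneg (by linarith [hx.2]) (hQT x hx)
  rw [integral_const_mul, integral_sub (by apply Continuous.intervalIntegrable; fun_prop)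
    (by apply Continuous.intervalIntegrable; fun_prop), hU0] at hftc
  nlinarith

end Transport

theorem transport_IQC_zero_terminal_cost_bilin {E : Type*} [NormedAddCommGroup E]
    [NormedSpace ℝ E] [CompleteSpace E] (β : E →L[ℝ] E →L[ℝ] ℝ) (hβ : ∀ v, 0 ≤ β v v)
    {ρ : ℝ} (hρ : 0 < ρ) (N : ℕ) {z : ℝ × ℝ → E} (hz : ContDiff ℝ 1 z)
    (hpde : ∀ x ∈ Set.Icc (0 : ℝ) 1, ∀ t ≥ (0 : ℝ),
      deriv (fun s => z (x, s)) t = -ρ • deriv (fun y => z (y, t)) x)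
    (hinit : ∀ x ∈ Set.Icc (0 : ℝ) 1, z (x, 0) = 0) {T : ℝ} (hT : 0 ≤ T) :
    0 ≤ ∫ t in (0 : ℝ)..T, (β (z (0, t)) (z (0, t)) - ∑ k ∈ range (N + 1),
      (2 * (k : ℝ) + 1) * β (legendreCoeff (fun x => z (x, t)) k)
        (legendreCoeff (fun x => z (x, t)) k)) := by
  have hzc : Continuous z := hz.continuous
  have hcoeff : ∀ k, Continuous fun t => legendreCoeff (fun x => z (x, t)) k := fun k => by
    unfold legendreCoeff
    fun_prop
  have hbessel := fun t =>
    sum_legendreCoeff_le_integral β hβ N (w := fun x => z (x, t)) (by fun_prop)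
  have henergy := integral_integral_le_integral_of_transport hρ (Q := fun p => β (z p) (z p))
    (by fun_prop) (fun x hx t ht => deriv_bilin_self_of_transport β
      (hz.differentiable one_ne_zero) (hpde x hx t ht))
    (fun x hx => by simp [hinit x hx]) hT (fun x _ => hβ _)
  rw [integral_sub (by apply Continuous.intervalIntegrable; fun_prop)
    (by apply Continuous.intervalIntegrable; fun_prop)]
  have hbessel_int := integral_mono_on (μ := MeasureTheory.volume) hT
    (by apply Continuous.intervalIntegrable; fun_prop)
    (by apply Continuous.intervalIntegrable; fun_prop) fun t _ => hbessel t
  linarith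

theorem transport_IQC_zero_terminal_cost_general
    (ρ : ℝ) (hρ : 0 < ρ) (l N : ℕ)
    (R : Matrix (Fin l) (Fin l) ℝ)
    (hRpd : ∀ v : Fin l → ℝ, v ≠ 0 → 0 < v ⬝ᵥ R.mulVec v)
    (z : ℝ × ℝ → Fin l → ℝ)
    (hz : ContDiff ℝ 1 z)
    (hpde : ∀ x ∈ Set.Icc (0:ℝ) 1, ∀ t ≥ (0:ℝ),
      deriv (fun s => z (x, s)) t = -ρ • deriv (fun y => z (y, t)) x)
    (hinit : ∀ x ∈ Set.Icc (0:ℝ) 1, z (x, 0) = 0)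
    (Ω : ℕ → ℝ → Fin l → ℝ)
    (hΩ : ∀ k t i, Ω k t i = ∫ x in (0:ℝ)..1, z (x, t) i * shiftedLegendre k x) :
    ∀ T ≥ (0:ℝ),
      (∫ t in (0:ℝ)..T,
        (z (0, t) ⬝ᵥ R.mulVec (z (0, t)) -
          ∑ k ∈ range (N + 1), (2 * (k : ℝ) + 1) * (Ω k t ⬝ᵥ R.mulVec (Ω k t)))) ≥ 0 := by
  intro T hT
  obtain ⟨β, hβ⟩ : ∃ β : (Fin l → ℝ) →L[ℝ] (Fin l → ℝ) →L[ℝ] ℝ,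
      ∀ u v, β u v = u ⬝ᵥ R.mulVec v :=
    ⟨LinearMap.toContinuousLinearMap
      (LinearMap.toContinuousLinearMap.toLinearMap ∘ₗ Matrix.toBilin' R),
      fun u v => by simp [Matrix.toBilin'_apply']⟩
  have hβ_nonneg : ∀ v, 0 ≤ β v v := fun v => by
    rcases eq_or_ne v 0 with rfl | hv
    · simp
    · exact hβ v v ▸ (hRpd v hv).le
  have hΩ_eq : ∀ k t, Ω k t = legendreCoeff (fun x => z (x, t)) k := fun k t => by
    funext i
    rw [hΩ, legendreCoeff_apply (by have := hz.continuous; fun_prop)]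
  simpa only [hΩ_eq, hβ] using
    transport_IQC_zero_terminal_cost_bilin β hβ_nonneg hρ N hz hpde hinit hT

/-- **Lemma 2** (finite-horizon IQC with zero terminal cost for the transport
equation): for `R ≻ 0` symmetric and `z` a solution of `z_t = −ρ z_x` on
`[0,1] × [0,∞)` with zero initial condition, for every `T ≥ 0`,
`∫₀^T ( z(0,t)ᵀ R z(0,t) − ∑_{k=0}^{N} (2k+1) Ω_k(t)ᵀ R Ω_k(t) ) dt ≥ 0`. -/
theorem transport_IQC_zero_terminal_cost
    (ρ : ℝ) (hρ : 0 < ρ) (l N : ℕ)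
    (R : Matrix (Fin l) (Fin l) ℝ) (hRsymm : R.IsSymm)
    (hRpd : ∀ v : Fin l → ℝ, v ≠ 0 → 0 < v ⬝ᵥ R.mulVec v)
    (z : ℝ × ℝ → Fin l → ℝ)
    (hz : ContDiff ℝ 1 z)
    (hpde : ∀ x ∈ Set.Icc (0:ℝ) 1, ∀ t ≥ (0:ℝ),
      deriv (fun s => z (x, s)) t = -ρ • deriv (fun y => z (y, t)) x)
    (hinit : ∀ x ∈ Set.Icc (0:ℝ) 1, z (x, 0) = 0)
    (Ω : ℕ → ℝ → Fin l → ℝ)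
    (hΩ : ∀ k t i, Ω k t i = ∫ x in (0:ℝ)..1, z (x, t) i * shiftedLegendre k x) :
    ∀ T ≥ (0:ℝ),
      (∫ t in (0:ℝ)..T,
        (z (0, t) ⬝ᵥ R.mulVec (z (0, t)) -
          ∑ k ∈ range (N + 1), (2 * (k : ℝ) + 1) * (Ω k t ⬝ᵥ R.mulVec (Ω k t)))) ≥ 0 :=
  transport_IQC_zero_terminal_cost_general ρ hρ l N R hRpd z hz hpde hinit Ω hΩ
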